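/- Fix l ∈ n_l and m, n ∈ n_b. For an angle vector θ define D_n(θ) := j·( C_{l n}·V_n·conj(I^fr_l) − (Σ_k C_{l k}·V_k)·conj((Y_f)_{l n})·conj(V_n) ) (the θ_n-partial derivative of S^fr_l), so that the θ_n-partial derivative of the squared apparent flow |S^fr_l|² equals 2·Re( conj(S^fr_l)·D_n(θ) ). Then the partial derivative with respect to θ_m of the function θ ↦ 2·Re( conj(S^fr_l)·D_n(θ) ) exists and equals 2·Re( conj(S^fr_l)·E_{m n} + D_m(θ)·conj(D_n(θ)) ), where E_{m n} := −[n = m]·C_{l n}·V_n·conj(I^fr_l) + C_{l n}·V_n·conj((Y_f)_{l m})·conj(V_m) + C_{l m}·V_m·conj((Y_f)_{l n})·conj(V_n) − [n = m]·(Σ_k C_{l k}·V_k)·conj((Y_f)_{l n})·conj(V_n) is the second partial derivative of S^fr_l with respect to θ_m and θ_n. -/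

import Mathlib

open Matrix

/-- Complex bus voltage `V_k = v_k · exp(j θ_k)`. -/
noncomputable def busV {nb : Type*} (v θ : nb → ℝ) (k : nb) : ℂ :=
  (v k : ℂ) * Complex.exp (Complex.I * (θ k : ℂ))

/-- From-end line current `I^fr_l = Σ_k (Y_f)_{l k} V_k`. -/
noncomputable def lineIfr {nl nb : Type*} [Fintype nb] (Yf : Matrix nl nb ℂ)
    (v θ : nb → ℝ) (l : nl) : ℂ :=
  ∑ k, Yf l k * busV v θ k

/-- From-end complex line flow `S^fr_l = (Σ_k C_{l k} V_k) · conj(I^fr_l)`. -/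
noncomputable def lineSfr {nl nb : Type*} [Fintype nb] (C Yf : Matrix nl nb ℂ)
    (v θ : nb → ℝ) (l : nl) : ℂ :=
  (∑ k, C l k * busV v θ k) * (starRingEnd ℂ) (lineIfr Yf v θ l)

/-- `θ_n`-partial derivative of `S^fr_l` as a function of the angle vector:
`D_n(θ) = j (C_{l n} V_n conj(I^fr_l) - (Σ_k C_{l k} V_k) conj((Y_f)_{l n}) conj(V_n))`. -/
noncomputable def lineDfr {nl nb : Type*} [Fintype nb] (C Yf : Matrix nl nb ℂ)
    (v θ : nb → ℝ) (l : nl) (n : nb) : ℂ :=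
  Complex.I *
    (C l n * busV v θ n * (starRingEnd ℂ) (lineIfr Yf v θ l)
      - (∑ k, C l k * busV v θ k) * (starRingEnd ℂ) (Yf l n) *
          (starRingEnd ℂ) (busV v θ n))

/-! Since `∂V_k/∂θ_m = [k = m]·j·V_k`, the angle derivatives of `I^fr_l`, `S^fr_l` and `D_n`
follow by the product rule, with `j² = -1` producing the signs of `E_{m n}`; the outer derivative
of `Re(conj S · D_n)` uses that `Re(D_m · conj D_n) = Re(conj D_m · D_n)`. -/

open ComplexConjugate

theorem HasDerivAt.re_conj_mul {f g : ℝ → ℂ} {f' g' : ℂ} {x : ℝ}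
    (hf : HasDerivAt f f' x) (hg : HasDerivAt g g' x) :
    HasDerivAt (fun t => (conj (f t) * g t).re) (conj (f x) * g' + f' * conj (g x)).re x := by
  refine (Complex.reCLM.hasFDerivAt.comp_hasDerivAt x (hf.star.mul hg)).congr_deriv ?_
  simp only [RCLike.star_def, Complex.reCLM_apply, Complex.add_re, Complex.mul_re,
    Complex.conj_re, Complex.conj_im]
  ring

section Angle

variable {nl nb : Type*} [DecidableEq nb]

theorem hasDerivAt_busV_update (v θ : nb → ℝ) (m k : nb) :
    HasDerivAt (fun t => busV v (Function.update θ m t) k)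
      ((if k = m then 1 else 0) * (Complex.I * busV v θ k)) (θ m) := by
  by_cases hkm : k = m
  · subst hkm
    have hexp : HasDerivAt (fun t : ℝ => Complex.exp (Complex.I * t))
        (Complex.exp (Complex.I * θ k) * Complex.I) (θ k) := by
      simpa using ((Complex.ofRealCLM.hasDerivAt (x := θ k)).const_mul Complex.I).cexp
    simp only [busV, Function.update_self, ↓reduceIte, one_mul]
    exact (hexp.const_mul (v k : ℂ)).congr_deriv (by ring)
  · simpa [busV, Function.update_of_ne hkm, hkm] using hasDerivAt_const (θ m) (busV v θ k)

variable [Fintype nb]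

theorem hasDerivAt_sum_mul_busV_update (a : nb → ℂ) (v θ : nb → ℝ) (m : nb) :
    HasDerivAt (fun t => ∑ k, a k * busV v (Function.update θ m t) k)
      (a m * (Complex.I * busV v θ m)) (θ m) := by
  refine (HasDerivAt.fun_sum fun k _ => (hasDerivAt_busV_update v θ m k).const_mul (a k))
    |>.congr_deriv ?_
  simp [Finset.sum_ite_eq']

theorem hasDerivAt_lineSfr_update (C Yf : Matrix nl nb ℂ) (v θ : nb → ℝ) (l : nl) (m : nb) :
    HasDerivAt (fun t => lineSfr C Yf v (Function.update θ m t) l)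
      (lineDfr C Yf v θ l m) (θ m) := by
  refine ((hasDerivAt_sum_mul_busV_update (C l) v θ m).mul
    (hasDerivAt_sum_mul_busV_update (Yf l) v θ m).star).congr_deriv ?_
  simp only [lineDfr, lineIfr, Function.update_eq_self, Complex.star_def, map_mul,
    Complex.conj_I]
  ring

theorem hasDerivAt_lineDfr_update (C Yf : Matrix nl nb ℂ) (v θ : nb → ℝ) (l : nl) (m n : nb) :
    HasDerivAt (fun t => lineDfr C Yf v (Function.update θ m t) l n)
      (-(if n = m then 1 else 0) * C l n * busV v θ n * conj (lineIfr Yf v θ l)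
        + C l n * busV v θ n * conj (Yf l m) * conj (busV v θ m)
        + C l m * busV v θ m * conj (Yf l n) * conj (busV v θ n)
        - (if n = m then 1 else 0) * (∑ k, C l k * busV v θ k) *
            conj (Yf l n) * conj (busV v θ n)) (θ m) := by
  have hV := hasDerivAt_busV_update v θ m n
  have hI := hasDerivAt_sum_mul_busV_update (Yf l) v θ m
  have hS := hasDerivAt_sum_mul_busV_update (C l) v θ m
  refine ((((hV.const_mul (C l n)).mul hI.star).sub
    ((hS.mul_const (conj (Yf l n))).mul hV.star)).const_mul Complex.I).congr_deriv ?_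
  simp only [lineIfr, Function.update_eq_self, Complex.star_def, map_mul, Complex.conj_I,
    apply_ite conj, map_one, map_zero]
  linear_combination
    ((if n = m then 1 else 0) * C l n * busV v θ n * conj (∑ k, Yf l k * busV v θ k)
    + (if n = m then 1 else 0) * (∑ k, C l k * busV v θ k) * conj (Yf l n) * conj (busV v θ n)
    - C l n * busV v θ n * conj (Yf l m) * conj (busV v θ m)
    - C l m * busV v θ m * conj (Yf l n) * conj (busV v θ n)) * Complex.I_sq

end Angle

/-- The `θ_m`-partial derivative of the `θ_n`-partial derivative
`θ ↦ 2 Re(conj(S^fr_l) D_n(θ))` of the squared apparent from-end flow. -/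
theorem hasDerivAt_lineSfr_normSq_angle_angle {nl nb : Type*} [Fintype nb]
    [DecidableEq nb] (C Yf : Matrix nl nb ℂ) (v θ : nb → ℝ) (l : nl) (m n : nb) :
    HasDerivAt
      (fun t : ℝ =>
        2 * ((starRingEnd ℂ) (lineSfr C Yf v (Function.update θ m t) l) *
            lineDfr C Yf v (Function.update θ m t) l n).re)
      (2 * ((starRingEnd ℂ) (lineSfr C Yf v θ l) *
          (-(if n = m then 1 else 0) * C l n * busV v θ n *
              (starRingEnd ℂ) (lineIfr Yf v θ l)
            + C l n * busV v θ n * (starRingEnd ℂ) (Yf l m) *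
                (starRingEnd ℂ) (busV v θ m)
            + C l m * busV v θ m * (starRingEnd ℂ) (Yf l n) *
                (starRingEnd ℂ) (busV v θ n)
            - (if n = m then 1 else 0) * (∑ k, C l k * busV v θ k) *
                (starRingEnd ℂ) (Yf l n) * (starRingEnd ℂ) (busV v θ n))
        + lineDfr C Yf v θ l m * (starRingEnd ℂ) (lineDfr C Yf v θ l n)).re)
      (θ m) := by
  have h := ((hasDerivAt_lineSfr_update C Yf v θ l m).re_conj_mul
    (hasDerivAt_lineDfr_update C Yf v θ l m n)).const_mul 2
  simpa only [Function.update_eq_self] using h
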